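/- arXiv:math/0407252 — 2 statements merged into one kernel-verified Lean document; each statement's English description precedes it below -/
import Mathlib

section
/- For f, g in L²(0,1), s_n(f)·c_n(g) = s_n(h₃), where h₃ = (1/2){R(Rf∗g − f∗Rg) + f∗g − Rf∗Rg}. -/
open MeasureTheory Real

/-- The measure of the unit interval `(0,1]` used to model `L²(0,1)`. -/
noncomputable def mu01 : Measure ℝ := volume.restrict (Set.Ioc (0:ℝ) 1)

/-- `n`-th cosine Fourier coefficient `c_n(f) = ∫₀¹ f(x) cos(πnx) dx`. -/
noncomputable def cosCoef (f : ℝ → ℂ) (n : ℕ) : ℂ :=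
  ∫ x in (0:ℝ)..1, f x * Complex.cos (Real.pi * n * x)

/-- Reflection about `x = 1/2`: `(Rf)(x) = f(1-x)`. -/
def Rref (f : ℝ → ℂ) : ℝ → ℂ := fun x => f (1 - x)

/-- Convolution `(f ∗ g)(x) = ∫₀ˣ f(x-t) g(t) dt`. -/
noncomputable def conv01 (f g : ℝ → ℂ) : ℝ → ℂ :=
  fun x => ∫ t in (0:ℝ)..x, f (x - t) * g t


/-- `n`-th sine Fourier coefficient `s_n(f) = ∫₀¹ f(x) sin(πnx) dx`. -/
noncomputable def sinCoef (f : ℝ → ℂ) (n : ℕ) : ℂ :=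
  ∫ x in (0:ℝ)..1, f x * Complex.sin (Real.pi * n * x)

/-! Extend `f` and `g` by zero outside `[0,1]` to `F` and `G`. On `[0,1]` the four truncated
convolutions become full-line ones: `R(Rf∗g − f∗Rg)(x) = C(x) − C(−x)` for the cross-correlation
`C = F ∗ G(−·)`, and `(f∗g − Rf∗Rg)(x) = (F∗G)(x) − (F∗G)(2−x)`. Since `sin(πn·)` is odd about
`0` and about `1`, while `C` and `F∗G` live on `[−1,1]` and `[0,2]`, the sine coefficient of `h₃` is
half the integral of `sin(πnx)(C + F∗G)(x)` over the whole line. By Fubini this is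
`½ ∬ f(u) g(t) (sin πn(u−t) + sin πn(u+t))`, and `sin(a−b) + sin(a+b) = 2 sin a cos b`. -/

open Set Function

local notation:67 F " ∗ " G:66 => convolution F G (ContinuousLinearMap.mul ℂ ℂ) volume

theorem intervalIntegral_eq_integral_of_support_subset_Icc {H : ℝ → ℂ} {a b : ℝ} (hab : a ≤ b)
    (hH : support H ⊆ Icc a b) : ∫ x in a..b, H x = ∫ x, H x := by
  rw [intervalIntegral.integral_of_le hab, ← integral_Icc_eq_integral_Ioc,
    setIntegral_eq_integral_of_forall_compl_eq_zero]
  intro x hx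
  exact notMem_support.mp fun h => hx (hH h)

theorem intervalIntegral_mul_eq_integral_indicator_mul (f ψ : ℝ → ℂ) :
    ∫ x in 0..1, f x * ψ x = ∫ x, (Icc (0:ℝ) 1).indicator f x * ψ x := by
  rw [← intervalIntegral_eq_integral_of_support_subset_Icc zero_le_one
    ((support_mul_subset_left _ _).trans support_indicator_subset)]
  refine intervalIntegral.integral_congr fun x hx => ?_
  rw [uIcc_of_le zero_le_one] at hx
  simp only [indicator_of_mem hx]

theorem integrable_indicator_Icc_of_memLp {f : ℝ → ℂ} {p : ENNReal} (hp : 1 ≤ p)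
    (hf : MemLp f p mu01) : Integrable ((Icc (0:ℝ) 1).indicator f) :=
  (integrable_indicator_iff measurableSet_Icc).mpr
    (IntegrableOn.congr_set_ae (MemLp.integrable (μ := volume.restrict (Ioc 0 1)) hp hf)
      Ioc_ae_eq_Icc.symm)

theorem conv01_eq_convolution_indicator (p q : ℝ → ℂ) {x : ℝ} (hx : x ∈ Icc (0:ℝ) 1) :
    conv01 p q x = ((Icc (0:ℝ) 1).indicator p ∗ (Icc (0:ℝ) 1).indicator q) x := by
  have hsub : ∀ {t}, t ∈ Icc 0 x → t ∈ Icc (0:ℝ) 1 := fun ht => ⟨ht.1, ht.2.trans hx.2⟩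
  rw [convolution_eq_swap, conv01]
  simp only [ContinuousLinearMap.mul_apply']
  rw [← intervalIntegral_eq_integral_of_support_subset_Icc hx.1]
  · refine intervalIntegral.integral_congr fun t ht => ?_
    rw [uIcc_of_le hx.1] at ht
    have hxt : x - t ∈ Icc 0 x := ⟨by linarith [ht.2], by linarith [ht.1]⟩
    simp only [indicator_of_mem (hsub ht), indicator_of_mem (hsub hxt)]
  · refine support_subset_iff'.mpr fun t ht => ?_
    rcases not_and_or.mp ht with h | h
    · simp only [indicator_of_notMem (fun h' : t ∈ Icc (0:ℝ) 1 => h h'.1), mul_zero]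
    · simp only [indicator_of_notMem (fun h' : x - t ∈ Icc (0:ℝ) 1 => h (by linarith [h'.1])),
        zero_mul]

-- Extending by zero over `Icc` rather than `Ioc` makes the extension commute with `Rref`.
theorem indicator_Icc_Rref (f : ℝ → ℂ) :
    (Icc (0:ℝ) 1).indicator (Rref f) = Rref ((Icc (0:ℝ) 1).indicator f) := by
  ext x
  simp only [Rref, indicator, mem_Icc, sub_nonneg, sub_le_self_iff]
  congr 1
  exact propext and_comm

section Reflection

variable (F G : ℝ → ℂ)

theorem convolution_Rref_Rref (x : ℝ) : (Rref F ∗ Rref G) x = (F ∗ G) (2 - x) := by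
  simp only [convolution, Rref, ContinuousLinearMap.mul_apply']
  rw [← integral_sub_left_eq_self _ volume 1]
  simp only [sub_sub_cancel]
  congr 1; ext t; congr 2; ring

theorem convolution_Rref_left (x : ℝ) :
    (Rref F ∗ G) (1 - x) = (F ∗ fun t => G (-t)) x := by
  simp only [convolution, Rref, ContinuousLinearMap.mul_apply']
  rw [← integral_sub_left_eq_self _ volume 1]
  simp only [sub_sub_cancel]
  congr 1; ext t; congr 2; ring

theorem convolution_Rref_right (x : ℝ) :
    (F ∗ Rref G) (1 - x) = (F ∗ fun t => G (-t)) (-x) := by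
  simp only [convolution, Rref, ContinuousLinearMap.mul_apply']
  congr 1; ext t; congr 2; ring

end Reflection

theorem conv01_combination_eq_convolution (f g : ℝ → ℂ) {x : ℝ} (hx : x ∈ Icc (0:ℝ) 1) :
    Rref (fun y => conv01 (Rref f) g y - conv01 f (Rref g) y) x
        + conv01 f g x - conv01 (Rref f) (Rref g) x
      = (((Icc 0 1).indicator f ∗ fun t => (Icc 0 1).indicator g (-t)) x
          - ((Icc 0 1).indicator f ∗ fun t => (Icc 0 1).indicator g (-t)) (-x))
        + (((Icc 0 1).indicator f ∗ (Icc 0 1).indicator g) x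
          - ((Icc 0 1).indicator f ∗ (Icc 0 1).indicator g) (2 - x)) := by
  have hx' : 1 - x ∈ Icc (0:ℝ) 1 := ⟨by linarith [hx.2], by linarith [hx.1]⟩
  show conv01 (Rref f) g (1 - x) - conv01 f (Rref g) (1 - x) + _ - _ = _
  rw [conv01_eq_convolution_indicator _ _ hx', conv01_eq_convolution_indicator _ _ hx',
    conv01_eq_convolution_indicator _ _ hx, conv01_eq_convolution_indicator _ _ hx,
    indicator_Icc_Rref, indicator_Icc_Rref, convolution_Rref_left, convolution_Rref_right,
    convolution_Rref_Rref]
  ring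

theorem support_convolution_subset_Icc {F G : ℝ → ℂ} {a b c d : ℝ} (hF : support F ⊆ Icc a b)
    (hG : support G ⊆ Icc c d) : support (F ∗ G) ⊆ Icc (a + c) (b + d) :=
  (support_convolution_subset _).trans ((add_subset_add hF hG).trans (Icc_add_Icc_subset _ _ _ _))

theorem support_comp_neg_subset_Icc {G : ℝ → ℂ} {c d : ℝ} (hG : support G ⊆ Icc c d) :
    support (fun t => G (-t)) ⊆ Icc (-d) (-c) := fun _ ht =>
  ⟨neg_le.mp (hG ht).2, le_neg_of_le_neg (hG ht).1⟩

theorem MeasureTheory.Integrable.mul_prod_mul_bdd {F G φ : ℝ → ℂ} (hF : Integrable F)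
    (hG : Integrable G) (hφ : Continuous φ) {C : ℝ} (hC : ∀ x, ‖φ x‖ ≤ C) {a : ℝ × ℝ → ℝ}
    (ha : Continuous a) :
    Integrable (fun p : ℝ × ℝ => F p.1 * G p.2 * φ (a p)) (volume.prod volume) :=
  (hF.mul_prod hG).mul_bdd (hφ.comp ha).aestronglyMeasurable (ae_of_all _ fun _ => hC _)

theorem integral_convolution_mul {F G φ : ℝ → ℂ} (hF : Integrable F) (hG : Integrable G)
    (hφ : Continuous φ) {C : ℝ} (hC : ∀ x, ‖φ x‖ ≤ C) :
    ∫ x, (F ∗ G) x * φ x = ∫ p : ℝ × ℝ, F p.1 * G p.2 * φ (p.1 + p.2) ∂(volume.prod volume) := by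
  have h_swap : Integrable (uncurry fun x t => F t * G (x - t) * φ x) (volume.prod volume) :=
    (hF.convolution_integrand (ContinuousLinearMap.mul ℂ ℂ) hG).mul_bdd
      (hφ.comp continuous_fst).aestronglyMeasurable (ae_of_all _ fun p => hC p.1)
  calc ∫ x, (F ∗ G) x * φ x = ∫ x, ∫ t, F t * G (x - t) * φ x := by
        simp only [convolution, ContinuousLinearMap.mul_apply', integral_mul_const]
    _ = ∫ t, ∫ x, F t * G (x - t) * φ x := integral_integral_swap h_swap
    _ = ∫ t, ∫ s, F t * G s * φ (t + s) := by
        congr 1; ext t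
        rw [← integral_add_right_eq_self _ t]
        congr 1; ext s
        rw [add_sub_cancel_right, add_comm]
    _ = _ := (integral_prod _ (hF.mul_prod_mul_bdd hG hφ hC continuous_add)).symm

theorem integral_prod_comp_neg_snd (h : ℝ × ℝ → ℂ) :
    ∫ p, h (p.1, -p.2) ∂(volume.prod volume) = ∫ p, h p ∂(volume.prod volume) :=
  ((MeasurePreserving.id volume).prod (Measure.measurePreserving_neg volume)).integral_comp'
    (f := (MeasurableEquiv.refl ℝ).prodCongr (MeasurableEquiv.neg ℝ)) h

theorem integral_convolution_comp_neg_mul {F G φ : ℝ → ℂ} (hF : Integrable F) (hG : Integrable G)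
    (hφ : Continuous φ) {C : ℝ} (hC : ∀ x, ‖φ x‖ ≤ C) :
    ∫ x, (F ∗ fun t => G (-t)) x * φ x
      = ∫ p : ℝ × ℝ, F p.1 * G p.2 * φ (p.1 - p.2) ∂(volume.prod volume) := by
  rw [integral_convolution_mul hF hG.comp_neg hφ hC,
    ← integral_prod_comp_neg_snd fun p => F p.1 * G p.2 * φ (p.1 - p.2)]
  simp only [sub_neg_eq_add]

theorem norm_sin_pi_mul_le_one (n : ℕ) (x : ℝ) : ‖Complex.sin (π * n * x)‖ ≤ 1 := by
  have h := Complex.norm_real (Real.sin (π * n * x))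
  push_cast at h
  exact h ▸ abs_sin_le_one _

theorem integral_sub_comp_sub_mul {H φ : ℝ → ℂ} (a : ℝ) (hφ : ∀ x, φ (a - x) = -φ x)
    (hHφ : Integrable fun x => H x * φ x) :
    ∫ x in 0..1, (H x - H (a - x)) * φ x
      = (∫ x in 0..1, H x * φ x) + ∫ x in (a - 1)..a, H x * φ x := by
  have h_refl : ∀ x, H (a - x) * φ x = -(H (a - x) * φ (a - x)) := fun x => by
    rw [hφ]; ring
  simp_rw [sub_mul, h_refl, sub_neg_eq_add]
  rw [intervalIntegral.integral_add hHφ.intervalIntegrable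
      (hHφ.comp_sub_left a).intervalIntegrable,
    intervalIntegral.integral_comp_sub_left (fun x => H x * φ x) a, sub_zero]

theorem integrable_mul_sin {H : ℝ → ℂ} (hH : Integrable H) (n : ℕ) :
    Integrable fun x : ℝ => H x * Complex.sin (π * n * x) :=
  hH.mul_bdd (by fun_prop : Continuous fun x : ℝ => Complex.sin (π * n * x)).aestronglyMeasurable
    (ae_of_all _ (norm_sin_pi_mul_le_one n))

theorem integral_sub_neg_mul_sin {H : ℝ → ℂ} (hH : Integrable H) (hHs : support H ⊆ Icc (-1) 1)
    (n : ℕ) :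
    ∫ x in 0..1, (H x - H (-x)) * Complex.sin (π * n * x)
      = ∫ x, H x * Complex.sin (π * n * x) := by
  have h := integral_sub_comp_sub_mul 0 (fun x => by push_cast; rw [← Complex.sin_neg]; ring_nf)
    (integrable_mul_sin hH n)
  simp only [zero_sub] at h
  rw [h, add_comm, intervalIntegral.integral_add_adjacent_intervals
    ((integrable_mul_sin hH n).intervalIntegrable) ((integrable_mul_sin hH n).intervalIntegrable),
    intervalIntegral_eq_integral_of_support_subset_Icc (by norm_num)
      ((support_mul_subset_left _ _).trans hHs)]

theorem integral_sub_two_sub_mul_sin {H : ℝ → ℂ} (hH : Integrable H) (hHs : support H ⊆ Icc 0 2)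
    (n : ℕ) :
    ∫ x in 0..1, (H x - H (2 - x)) * Complex.sin (π * n * x)
      = ∫ x, H x * Complex.sin (π * n * x) := by
  have h := integral_sub_comp_sub_mul 2 (fun x => by
      rw [← Complex.sin_nat_mul_two_pi_sub]; push_cast; ring_nf)
    (integrable_mul_sin hH n)
  norm_num at h
  rw [h, intervalIntegral.integral_add_adjacent_intervals
    ((integrable_mul_sin hH n).intervalIntegrable) ((integrable_mul_sin hH n).intervalIntegrable),
    intervalIntegral_eq_integral_of_support_subset_Icc (by norm_num)
      ((support_mul_subset_left _ _).trans hHs)]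

theorem integral_reflected_sum_mul_sin {H K : ℝ → ℂ} (hH : Integrable H)
    (hHs : support H ⊆ Icc (-1) 1) (hK : Integrable K) (hKs : support K ⊆ Icc 0 2) (n : ℕ) :
    ∫ x in 0..1, (1/2 : ℂ) * ((H x - H (-x)) + (K x - K (2 - x))) * Complex.sin (π * n * x)
      = (1/2 : ℂ)
        * ((∫ x, H x * Complex.sin (π * n * x)) + ∫ x, K x * Complex.sin (π * n * x)) := by
  simp only [mul_assoc (1/2 : ℂ), add_mul]
  rw [intervalIntegral.integral_const_mul, intervalIntegral.integral_add
    (integrable_mul_sin (H := fun x => H x - H (-x)) (hH.sub hH.comp_neg) n).intervalIntegrable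
    (integrable_mul_sin (H := fun x => K x - K (2 - x)) (hK.sub (hK.comp_sub_left 2))
      n).intervalIntegrable,
    integral_sub_neg_mul_sin hH hHs, integral_sub_two_sub_mul_sin hK hKs]

theorem integral_mul_sin_add_add_integral_mul_sin_sub {F G : ℝ → ℂ} (hF : Integrable F)
    (hG : Integrable G) (n : ℕ) :
    (∫ p : ℝ × ℝ, F p.1 * G p.2 * Complex.sin (π * n * (p.1 + p.2 : ℝ)) ∂(volume.prod volume))
      + ∫ p : ℝ × ℝ, F p.1 * G p.2 * Complex.sin (π * n * (p.1 - p.2 : ℝ)) ∂(volume.prod volume)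
      = 2 * ((∫ u, F u * Complex.sin (π * n * u)) * ∫ t, G t * Complex.cos (π * n * t)) := by
  have hφ : Continuous fun x : ℝ => Complex.sin (π * n * x) := by fun_prop
  rw [← integral_add (hF.mul_prod_mul_bdd hG hφ (norm_sin_pi_mul_le_one n) (by fun_prop))
      (hF.mul_prod_mul_bdd hG hφ (norm_sin_pi_mul_le_one n) (by fun_prop)),
    ← integral_prod_mul, ← integral_const_mul]
  congr 1; ext p
  push_cast
  rw [mul_add, mul_sub, Complex.sin_add, Complex.sin_sub]
  ring

/-- For `f, g ∈ L²(0,1)`, one has `s_n(f)·c_n(g) = s_n(h₃)` where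
`h₃ = ½ { R(Rf∗g − f∗Rg) + f∗g − Rf∗Rg }`. -/
theorem sin_mul_cos_eq_sinCoef
    (f g : ℝ → ℂ) (hf : MemLp f 2 mu01) (hg : MemLp g 2 mu01) (n : ℕ) :
    sinCoef f n * cosCoef g n =
      sinCoef (fun x =>
        (1/2 : ℂ) * (Rref (fun y => conv01 (Rref f) g y - conv01 f (Rref g) y) x
          + conv01 f g x - conv01 (Rref f) (Rref g) x)) n := by
  set F := (Icc (0:ℝ) 1).indicator f
  set G := (Icc (0:ℝ) 1).indicator g
  have hF : Integrable F := integrable_indicator_Icc_of_memLp one_le_two hf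
  have hG : Integrable G := integrable_indicator_Icc_of_memLp one_le_two hg
  have hFs : support F ⊆ Icc 0 1 := support_indicator_subset
  have hGs : support G ⊆ Icc 0 1 := support_indicator_subset
  have hφ : Continuous fun x : ℝ => Complex.sin (π * n * x) := by fun_prop
  have h_corr : support (F ∗ fun t => G (-t)) ⊆ Icc (-1) 1 := by
    simpa using support_convolution_subset_Icc hFs (support_comp_neg_subset_Icc hGs)
  have h_conv : support (F ∗ G) ⊆ Icc 0 2 := by
    simpa [one_add_one_eq_two] using support_convolution_subset_Icc hFs hGs
  calc sinCoef f n * cosCoef g n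
      = (1/2 : ℂ) * (2 * ((∫ u, F u * Complex.sin (π * n * u))
          * ∫ t, G t * Complex.cos (π * n * t))) := by
        rw [sinCoef, cosCoef, intervalIntegral_mul_eq_integral_indicator_mul,
          intervalIntegral_mul_eq_integral_indicator_mul]
        ring
    _ = (1/2 : ℂ) * ((∫ x, (F ∗ fun t => G (-t)) x * Complex.sin (π * n * x))
          + ∫ x, (F ∗ G) x * Complex.sin (π * n * x)) := by
        rw [integral_convolution_comp_neg_mul hF hG hφ (norm_sin_pi_mul_le_one n),
          integral_convolution_mul hF hG hφ (norm_sin_pi_mul_le_one n), add_comm,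
          integral_mul_sin_add_add_integral_mul_sin_sub hF hG]
    _ = _ := by
        rw [← integral_reflected_sum_mul_sin (hF.integrable_convolution _ hG.comp_neg) h_corr
          (hF.integrable_convolution _ hG) h_conv, sinCoef]
        refine intervalIntegral.integral_congr fun x hx => ?_
        rw [uIcc_of_le zero_le_one] at hx
        rw [conv01_combination_eq_convolution f g hx]
end

section
/- For τ ∈ L²(0,1) and the functions τ_n defined by τ₁ = τ and τ_{n+1}(s) = ∫_{Π*_n(s)} τ(s+ξ_n(y))τ(y₁)···τ(y_n) dy₁⋯dy_n, one has ‖τ_n‖²_{L²} ≤ ‖τ‖_{L²}^{2n} / ((n−1)!·n!); consequently the series Σ_{n≥1}(±1)ⁿ τ_n converges in L²(0,1). -/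
open MeasureTheory Real

/-- The alternating sum `ξ_m(y) = Σ_{l=1}^m (−1)^{l+1} y_l` (0-indexed). -/
def xiAlt (m : ℕ) (y : Fin m → ℝ) : ℝ := ∑ i : Fin m, (-1:ℝ)^(i:ℕ) * y i

/-- The region `Π*_m(s) = {y : 0 ≤ y_m ≤ ⋯ ≤ y₁ ≤ s + ξ_m(y) ≤ 1}`. -/
def simplexStar (m : ℕ) (s : ℝ) : Set (Fin m → ℝ) :=
  {y | (∀ i : Fin m, 0 ≤ y i) ∧ (∀ i j : Fin m, i ≤ j → y j ≤ y i) ∧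
       (∀ i : Fin m, y i ≤ s + xiAlt m y) ∧ s + xiAlt m y ≤ 1}

/-- The `L²(0,1)` norm (as a real number). -/
noncomputable def L2norm (f : ℝ → ℂ) : ℝ := (eLpNorm f 2 mu01).toReal

/-- The iterated functions `τ_n`: `tauN τ m` is `τ_{m+1}`, i.e. `tauN τ 0 = τ₁ = τ`
and `τ_{m+1}(s) = ∫_{Π*_m(s)} τ(s+ξ_m(y)) τ(y₁) ⋯ τ(y_m) dy`. -/
noncomputable def tauN (τ : ℝ → ℂ) : ℕ → ℝ → ℂ
  | 0 => τ
  | (m+1) => fun s => ∫ y in simplexStar (m+1) s,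
      τ (s + xiAlt (m+1) y) * ∏ i : Fin (m+1), τ (y i)

/-!
Cauchy–Schwarz on the region `Π*_n(s)` gives
`|τ_{n+1}(s)|² ≤ vol(Π*_n(s)) ∫_{Π*_n(s)} |τ(s + ξ_n(y))|² ∏ |τ(y_l)|² dy`, and `Π*_n(s)` lies
in the ordered simplex `{1 ≥ y₁ ≥ ⋯ ≥ y_n ≥ 0}`, whose volume is `1/n!`. Integrating in `s` and
substituting `u = s + ξ_n(y)`, the tuple `(u, y₁, …, y_n)` is again ordered in `[0,1]`, so the
double integral is bounded by the integral of `∏ |τ|²` over the ordered simplex in dimension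
`n+1`, i.e. by `‖τ‖₂^{2(n+1)}/(n+1)!`: the `(n+1)!` orderings of a tuple tile the cube up to ties,
which are null. Hence `‖τ_n‖₂ ≤ ‖τ‖₂ⁿ/(n-1)!`, so both series converge absolutely in `L²`.
-/

open MeasureTheory Set Filter Topology
open scoped ENNReal Nat

theorem LinearMap.quasiMeasurePreserving_of_surjective {E F : Type*}
    [NormedAddCommGroup E] [NormedSpace ℝ E] [MeasurableSpace E] [BorelSpace E]
    [FiniteDimensional ℝ E] [NormedAddCommGroup F] [NormedSpace ℝ F] [MeasurableSpace F]
    [BorelSpace F] (μ : Measure E) [μ.IsAddHaarMeasure] (ν : Measure F) [ν.IsAddHaarMeasure]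
    {L : E →ₗ[ℝ] F} (hL : Function.Surjective L) : Measure.QuasiMeasurePreserving L μ ν := by
  obtain ⟨c, -, hc⟩ := L.exists_map_addHaar_eq_smul_addHaar μ ν hL
  exact ⟨L.continuous_of_finiteDimensional.measurable, hc ▸ Measure.smul_absolutelyContinuous⟩

theorem quasiMeasurePreserving_dotProduct {n : ℕ} {w : Fin n → ℝ} (hw : w ≠ 0) :
    Measure.QuasiMeasurePreserving (dotProduct w) := by
  classical
  obtain ⟨i, hi⟩ := Function.ne_iff.1 hw
  refine (dotProductEquiv ℝ (Fin n) w).quasiMeasurePreserving_of_surjective volume volume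
    fun t => ⟨Pi.single i (t / w i), ?_⟩
  simp [dotProduct_single, mul_div_cancel₀ _ hi]

section OrderedTuples

variable {n : ℕ}

theorem ae_antitone_imp_strictAnti : ∀ᵐ y : Fin n → ℝ, Antitone y → StrictAnti y := by
  classical
  have hinj : ∀ᵐ y : Fin n → ℝ, ∀ i j, i ≠ j → y i ≠ y j := by
    refine ae_all_iff.2 fun i => ae_all_iff.2 fun j => ?_
    by_cases hij : i = j
    · exact .of_forall fun _ h => absurd hij h
    have hw : Pi.single i 1 - Pi.single j 1 ≠ (0 : Fin n → ℝ) :=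
      Function.ne_iff.2 ⟨i, by simp [hij]⟩
    filter_upwards [(quasiMeasurePreserving_dotProduct hw).ae (volume.ae_ne 0)] with y hy _
    simpa [sub_dotProduct, sub_eq_zero] using hy
  filter_upwards [hinj] with y hy hanti
  exact hanti.strictAnti_of_injective fun i j h => by_contra fun hne => hy i j hne h

theorem measurableSet_antitone : MeasurableSet {y : Fin n → ℝ | Antitone y} := by
  simp only [Antitone]; measurability

theorem lintegral_lintegral_cons {K : (Fin (n + 1) → ℝ) → ℝ≥0∞} (hK : Measurable K) :
    ∫⁻ y : Fin n → ℝ, ∫⁻ u, K (Fin.cons u y) = ∫⁻ z, K z := by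
  set e := MeasurableEquiv.piFinSuccAbove (fun _ : Fin (n + 1) => ℝ) 0
  have hmp := (volume_preserving_piFinSuccAbove (fun _ : Fin (n + 1) => ℝ) 0).symm
  rw [← hmp.lintegral_comp_emb e.symm.measurableEmbedding, Measure.volume_eq_prod,
    lintegral_prod_symm (fun p => K (e.symm p)) (hK.comp e.symm.measurable).aemeasurable]
  simp only [e, MeasurableEquiv.piFinSuccAbove_symm_apply, Fin.insertNthEquiv_zero]
  rfl

theorem lintegral_fin_prod_volume_eq_pow {g : ℝ → ℝ≥0∞} (hg : Measurable g) :
    ∫⁻ y : Fin n → ℝ, ∏ i, g (y i) = (∫⁻ t, g t) ^ n := by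
  have hP : ∀ m, Measurable fun y : Fin m → ℝ => ∏ i, g (y i) := fun m =>
    Finset.measurable_prod _ fun i _ => hg.comp (measurable_pi_apply i)
  induction n with
  | zero => simp [volume_pi, Measure.pi_empty_univ]
  | succ n ih =>
    rw [← lintegral_lintegral_cons (hP (n + 1))]
    simp only [Fin.prod_univ_succ, Fin.cons_zero, Fin.cons_succ]
    simp_rw [lintegral_mul_const _ hg, lintegral_const_mul _ (hP n), ih, pow_succ']

theorem setLIntegral_antitone_prod_le {g : ℝ → ℝ≥0∞} (hg : Measurable g) :
    ∫⁻ y in {y : Fin n → ℝ | Antitone y}, ∏ i, g (y i) ≤ (n ! : ℝ≥0∞)⁻¹ * (∫⁻ t, g t) ^ n := by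
  refine (ENNReal.mul_le_iff_le_inv (by simp [Nat.factorial_ne_zero]) (by simp)).1 ?_
  set P : (Fin n → ℝ) → ℝ≥0∞ := fun y => ∏ i, g (y i)
  set S : Equiv.Perm (Fin n) → Set (Fin n → ℝ) := fun σ => {y | StrictAnti (y ∘ σ)}
  have hS : ∀ σ, MeasurableSet (S σ) := fun σ => by
    simp only [S, StrictAnti]; measurability
  have hsymm : ∀ σ, ∫⁻ y in S σ, P y = ∫⁻ y in S 1, P y := fun σ => by
    have hmp : MeasurePreserving (fun y : Fin n → ℝ => y ∘ σ) :=
      volume_preserving_arrowCongr' σ.symm (MeasurableEquiv.refl ℝ) (.id _)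
    calc ∫⁻ y in S σ, P y = ∫⁻ y in (fun y => y ∘ σ) ⁻¹' S 1, P (y ∘ σ) :=
          setLIntegral_congr_fun (hS σ) fun y _ => (Equiv.prod_comp σ fun i => g (y i)).symm
      _ = ∫⁻ y in S 1, P y := hmp.setLIntegral_comp_preimage_emb
          (MeasurableEquiv.arrowCongr' σ.symm (MeasurableEquiv.refl ℝ)).measurableEmbedding P (S 1)
  -- A tuple has at most one strictly decreasing rearrangement.
  have hdisj : Pairwise (Function.onFun Disjoint S) := fun σ τ hne => by
    refine Set.disjoint_left.2 fun y (hσ : StrictAnti (y ∘ σ)) (hτ : StrictAnti (y ∘ τ)) => hne ?_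
    have hcomp : y ∘ σ = y ∘ τ := (hσ.range_inj hτ).1 <| by
      rw [Set.range_comp, Set.range_comp, σ.range_eq_univ, τ.range_eq_univ]
    have hy : Function.Injective y := by
      simpa using hσ.injective.comp σ.symm.injective
    exact Equiv.ext fun i => hy (congrFun hcomp i)
  have hanti : {y : Fin n → ℝ | Antitone y} =ᵐ[volume] S 1 := by
    filter_upwards [ae_antitone_imp_strictAnti] with y hy
    exact propext ⟨hy, StrictAnti.antitone⟩
  calc n ! * ∫⁻ y in {y : Fin n → ℝ | Antitone y}, P y
      = ∑ σ : Equiv.Perm (Fin n), ∫⁻ y in S σ, P y := by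
        rw [setLIntegral_congr hanti, Finset.sum_congr rfl fun σ _ => hsymm σ, Finset.sum_const,
          Finset.card_univ, Fintype.card_perm, Fintype.card_fin, nsmul_eq_mul]
    _ = ∫⁻ y in ⋃ σ, S σ, P y := by rw [lintegral_iUnion hS hdisj, tsum_fintype]
    _ ≤ ∫⁻ y, P y := setLIntegral_le_lintegral _ _
    _ = (∫⁻ t, g t) ^ n := lintegral_fin_prod_volume_eq_pow hg

end OrderedTuples

theorem sq_enorm_integral_le {α E : Type*} [MeasurableSpace α] {μ : Measure α}
    [NormedAddCommGroup E] [NormedSpace ℝ E] {f : α → E} (hf : AEStronglyMeasurable f μ) :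
    ‖∫ x, f x ∂μ‖ₑ ^ 2 ≤ μ univ * ∫⁻ x, ‖f x‖ₑ ^ 2 ∂μ := by
  have hCS := ENNReal.lintegral_mul_le_Lp_mul_Lq μ Real.HolderConjugate.two_two hf.enorm
    (aemeasurable_const (b := (1 : ℝ≥0∞)))
  simp only [Pi.mul_apply, mul_one, ENNReal.rpow_two, one_pow, one_mul, lintegral_const] at hCS
  calc ‖∫ x, f x ∂μ‖ₑ ^ 2 ≤ (∫⁻ x, ‖f x‖ₑ ∂μ) ^ 2 :=
        pow_le_pow_left' (enorm_integral_le_lintegral_enorm f) 2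
    _ ≤ ((∫⁻ x, ‖f x‖ₑ ^ 2 ∂μ) ^ (1 / 2 : ℝ) * μ univ ^ (1 / 2 : ℝ)) ^ 2 :=
        pow_le_pow_left' hCS 2
    _ = μ univ * ∫⁻ x, ‖f x‖ₑ ^ 2 ∂μ := by
        rw [mul_pow, ← ENNReal.rpow_natCast, ← ENNReal.rpow_natCast (μ univ ^ _),
          ← ENNReal.rpow_mul, ← ENNReal.rpow_mul]
        norm_num [mul_comm]

theorem eLpNorm_two_sq {α E : Type*} [MeasurableSpace α] [NormedAddCommGroup E] (f : α → E)
    (μ : Measure α) : eLpNorm f 2 μ ^ 2 = ∫⁻ x, ‖f x‖ₑ ^ 2 ∂μ := by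
  simpa using eLpNorm_nnreal_pow_eq_lintegral (f := f) (μ := μ) (p := 2) two_ne_zero

theorem exists_memLp_tendsto_eLpNorm_sum_sub {α E : Type*} [MeasurableSpace α] {μ : Measure α}
    [NormedAddCommGroup E] [CompleteSpace E] {p : ℝ≥0∞} [Fact (1 ≤ p)] {f : ℕ → α → E}
    (hf : ∀ k, MemLp (f k) p μ) (hsum : Summable fun k => (eLpNorm (f k) p μ).toReal) :
    ∃ g : α → E, MemLp g p μ ∧
      Tendsto (fun N => eLpNorm (fun x => (∑ k ∈ Finset.range N, f k x) - g x) p μ) atTop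
        (𝓝 0) := by
  set F : ℕ → Lp E p μ := fun k => (hf k).toLp (f k)
  have hF : Summable F := Summable.of_norm <| by simpa [F, Lp.norm_toLp] using hsum
  have hpartial : ∀ N, MemLp (∑ k ∈ Finset.range N, f k) p μ := fun N =>
    memLp_finsetSum' _ fun k _ => hf k
  have htoLp : ∀ N, (hpartial N).toLp _ = ∑ k ∈ Finset.range N, F k := by
    intro N
    induction N with
    | zero => simp only [Finset.sum_range_zero]; exact MemLp.toLp_zero _
    | succ N ih =>
      simp only [Finset.sum_range_succ, ← ih]
      exact MemLp.toLp_add (hpartial N) (hf N)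
  set G := ∑' k, F k
  refine ⟨G, Lp.memLp G, ?_⟩
  have hlim : Tendsto (fun N => (hpartial N).toLp _) atTop (𝓝 ((Lp.memLp G).toLp G)) := by
    simpa [htoLp] using hF.hasSum.tendsto_sum_nat
  simpa only [Pi.sub_def, Finset.sum_apply] using
    (Lp.tendsto_Lp_iff_tendsto_eLpNorm'' _ hpartial _ (Lp.memLp G)).1 hlim

section SimplexStar

variable {n : ℕ} {s : ℝ}

theorem measurable_xiAlt (n : ℕ) : Measurable (xiAlt n) := by
  unfold xiAlt; fun_prop

theorem measurableSet_simplexStar_graph (n : ℕ) :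
    MeasurableSet {p : ℝ × (Fin n → ℝ) | p.2 ∈ simplexStar n p.1} := by
  simp only [simplexStar, xiAlt]
  measurability

theorem measurableSet_simplexStar (n : ℕ) (s : ℝ) : MeasurableSet (simplexStar n s) :=
  measurable_prodMk_left (measurableSet_simplexStar_graph n)

theorem simplexStar_subset_antitone : simplexStar n s ⊆ {y | Antitone y} :=
  fun _ hy _ _ => hy.2.1 _ _

theorem mem_Icc_of_mem_simplexStar {y : Fin n → ℝ} (hy : y ∈ simplexStar n s) (i : Fin n) :
    y i ∈ Icc 0 1 :=
  ⟨hy.1 i, (hy.2.2.1 i).trans hy.2.2.2⟩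

theorem add_xiAlt_mem_Icc {y : Fin (n + 1) → ℝ} (hy : y ∈ simplexStar (n + 1) s) :
    s + xiAlt (n + 1) y ∈ Icc 0 1 :=
  ⟨(hy.1 0).trans (hy.2.2.1 0), hy.2.2.2⟩

theorem volume_simplexStar_le (n : ℕ) (s : ℝ) : volume (simplexStar n s) ≤ (n ! : ℝ≥0∞)⁻¹ := by
  set g := (Icc (0 : ℝ) 1).indicator (1 : ℝ → ℝ≥0∞)
  calc volume (simplexStar n s) = ∫⁻ y in simplexStar n s, ∏ i, g (y i) := by
        rw [← setLIntegral_one]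
        refine setLIntegral_congr_fun (measurableSet_simplexStar n s) fun y hy => ?_
        simp [g, indicator_of_mem (mem_Icc_of_mem_simplexStar hy _)]
    _ ≤ ∫⁻ y in {y : Fin n → ℝ | Antitone y}, ∏ i, g (y i) :=
        lintegral_mono_set simplexStar_subset_antitone
    _ ≤ (n ! : ℝ≥0∞)⁻¹ * (∫⁻ t, g t) ^ n :=
        setLIntegral_antitone_prod_le (measurable_one.indicator measurableSet_Icc)
    _ = (n ! : ℝ≥0∞)⁻¹ := by simp [g, lintegral_indicator measurableSet_Icc]

theorem quasiMeasurePreserving_const_add_xiAlt (n : ℕ) (s : ℝ) :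
    Measure.QuasiMeasurePreserving (fun y => s + xiAlt (n + 1) y) :=
  (measurePreserving_add_left volume s).quasiMeasurePreserving.comp
    (quasiMeasurePreserving_dotProduct (w := fun i : Fin (n + 1) => (-1 : ℝ) ^ (i : ℕ))
      (Function.ne_iff.2 ⟨0, by simp⟩))

theorem indicator_simplexStar_le_indicator_antitone_cons {G : ℝ → ℝ≥0∞} (s : ℝ)
    (y : Fin (n + 1) → ℝ) :
    (simplexStar (n + 1) s).indicator (fun y => G (s + xiAlt (n + 1) y) * ∏ i, G (y i)) y ≤
      {z : Fin (n + 2) → ℝ | Antitone z}.indicator (fun z => ∏ i, (Icc 0 1).indicator G (z i))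
        (Fin.cons (s + xiAlt (n + 1) y) y) := by
  by_cases hy : y ∈ simplexStar (n + 1) s
  · have hcons : Antitone (Fin.cons (s + xiAlt (n + 1) y) y : Fin (n + 2) → ℝ) :=
      antitone_vecCons.2 ⟨hy.2.2.1 0, hy.2.1⟩
    rw [indicator_of_mem hy, indicator_of_mem (show _ ∈ {z | Antitone z} from hcons),
      Fin.prod_univ_succ (n := n + 1), Fin.cons_zero, indicator_of_mem (add_xiAlt_mem_Icc hy)]
    refine le_of_eq (congrArg _ (Finset.prod_congr rfl fun i _ => ?_))
    rw [Fin.cons_succ, indicator_of_mem (mem_Icc_of_mem_simplexStar hy i)]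
  · rw [indicator_of_notMem hy]
    exact zero_le

theorem lintegral_simplexStar_le {G : ℝ → ℝ≥0∞} (hG : Measurable G) (n : ℕ) :
    ∫⁻ s, ∫⁻ y in simplexStar (n + 1) s, G (s + xiAlt (n + 1) y) * ∏ i, G (y i)
      ≤ ((n + 2)! : ℝ≥0∞)⁻¹ * (∫⁻ t in Icc 0 1, G t) ^ (n + 2) := by
  set g := (Icc (0 : ℝ) 1).indicator G
  have hg : Measurable g := hG.indicator measurableSet_Icc
  set K : (Fin (n + 2) → ℝ) → ℝ≥0∞ := {z | Antitone z}.indicator fun z => ∏ i, g (z i)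
  have hK : Measurable K :=
    (Finset.measurable_prod _ fun i _ => hg.comp (measurable_pi_apply i)).indicator
      measurableSet_antitone
  set W : ℝ → (Fin (n + 1) → ℝ) → ℝ≥0∞ := fun s => (simplexStar (n + 1) s).indicator
    fun y => G (s + xiAlt (n + 1) y) * ∏ i, G (y i)
  have hW : Measurable (Function.uncurry W) := by
    change Measurable ({p : ℝ × (Fin (n + 1) → ℝ) | p.2 ∈ simplexStar (n + 1) p.1}.indicator
      fun p => G (p.1 + xiAlt (n + 1) p.2) * ∏ i, G (p.2 i))
    refine Measurable.indicator ?_ (measurableSet_simplexStar_graph _)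
    have := measurable_xiAlt (n + 1)
    fun_prop
  calc ∫⁻ s, ∫⁻ y in simplexStar (n + 1) s, G (s + xiAlt (n + 1) y) * ∏ i, G (y i)
      = ∫⁻ y, ∫⁻ s, W s y := by
        rw [← lintegral_lintegral_swap hW.aemeasurable]
        exact lintegral_congr fun s => (lintegral_indicator (measurableSet_simplexStar _ s) _).symm
    _ ≤ ∫⁻ y, ∫⁻ s, K (Fin.cons (s + xiAlt (n + 1) y) y) := by
        gcongr with y s
        exact indicator_simplexStar_le_indicator_antitone_cons s y
    _ = ∫⁻ y, ∫⁻ u, K (Fin.cons u y) := lintegral_congr fun y =>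
        lintegral_add_right_eq_self (fun u => K (Fin.cons u y)) (xiAlt (n + 1) y)
    _ = ∫⁻ z, K z := lintegral_lintegral_cons hK
    _ ≤ ((n + 2)! : ℝ≥0∞)⁻¹ * (∫⁻ t, g t) ^ (n + 2) := by
        rw [lintegral_indicator measurableSet_antitone]
        exact setLIntegral_antitone_prod_le hg
    _ = ((n + 2)! : ℝ≥0∞)⁻¹ * (∫⁻ t in Icc 0 1, G t) ^ (n + 2) := by
        rw [lintegral_indicator measurableSet_Icc]

end SimplexStar

theorem tauN_succ_congr {τ τ' : ℝ → ℂ} (h : τ =ᵐ[volume.restrict (Icc 0 1)] τ') (n : ℕ) :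
    tauN τ (n + 1) = tauN τ' (n + 1) := by
  funext s
  rw [EventuallyEq, ae_restrict_iff' measurableSet_Icc] at h
  have hcoord : ∀ᵐ y : Fin (n + 1) → ℝ, ∀ i, y i ∈ Icc 0 1 → τ (y i) = τ' (y i) :=
    ae_all_iff.2 fun i => by
      rw [volume_pi]
      exact (Measure.quasiMeasurePreserving_eval (fun _ => (volume : Measure ℝ)) i).ae h
  refine setIntegral_congr_ae (measurableSet_simplexStar _ s) ?_
  filter_upwards [hcoord, (quasiMeasurePreserving_const_add_xiAlt n s).ae h] with y hy hξ hmem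
  rw [hξ (add_xiAlt_mem_Icc hmem)]
  exact congrArg _ (Finset.prod_congr rfl fun i _ => hy i (mem_Icc_of_mem_simplexStar hmem i))

section MeasurableKernel

variable {τ : ℝ → ℂ} (hτ : Measurable τ) (n : ℕ)
include hτ

theorem stronglyMeasurable_tauN_succ : StronglyMeasurable (tauN τ (n + 1)) := by
  have hF : StronglyMeasurable
      ({p : ℝ × (Fin (n + 1) → ℝ) | p.2 ∈ simplexStar (n + 1) p.1}.indicator
        fun p => τ (p.1 + xiAlt (n + 1) p.2) * ∏ i, τ (p.2 i)) := by
    refine (Measurable.indicator ?_ (measurableSet_simplexStar_graph _)).stronglyMeasurable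
    have := measurable_xiAlt (n + 1)
    fun_prop
  convert hF.integral_prod_right' (ν := volume) using 2 with s
  exact (integral_indicator (measurableSet_simplexStar _ s)).symm

theorem enorm_tauN_succ_sq_le (s : ℝ) :
    ‖tauN τ (n + 1) s‖ₑ ^ 2 ≤ ((n + 1)! : ℝ≥0∞)⁻¹ *
      ∫⁻ y in simplexStar (n + 1) s, ‖τ (s + xiAlt (n + 1) y)‖ₑ ^ 2 * ∏ i, ‖τ (y i)‖ₑ ^ 2 := by
  have hf : AEStronglyMeasurable (fun y => τ (s + xiAlt (n + 1) y) * ∏ i, τ (y i))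
      (volume.restrict (simplexStar (n + 1) s)) := by
    have := measurable_xiAlt (n + 1)
    exact Measurable.aestronglyMeasurable (by fun_prop)
  refine (sq_enorm_integral_le hf).trans ?_
  rw [Measure.restrict_apply_univ]
  gcongr
  · exact volume_simplexStar_le _ s
  · simp [enorm_eq_nnnorm, nnnorm_prod, Finset.prod_pow, mul_pow]

theorem lintegral_enorm_tauN_succ_sq_le :
    ∫⁻ s, ‖tauN τ (n + 1) s‖ₑ ^ 2 ≤
      ((n + 1)! : ℝ≥0∞)⁻¹ * ((n + 2)! : ℝ≥0∞)⁻¹ * (∫⁻ t in Icc 0 1, ‖τ t‖ₑ ^ 2) ^ (n + 2) := by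
  calc ∫⁻ s, ‖tauN τ (n + 1) s‖ₑ ^ 2
      ≤ ∫⁻ s, ((n + 1)! : ℝ≥0∞)⁻¹ * ∫⁻ y in simplexStar (n + 1) s,
          ‖τ (s + xiAlt (n + 1) y)‖ₑ ^ 2 * ∏ i, ‖τ (y i)‖ₑ ^ 2 :=
        lintegral_mono (enorm_tauN_succ_sq_le hτ n)
    _ ≤ _ := by
        rw [lintegral_const_mul' _ _ (by simp [Nat.factorial_ne_zero]), mul_assoc]
        gcongr
        exact lintegral_simplexStar_le (hτ.enorm.pow_const 2) n

end MeasurableKernel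

theorem mu01_eq_restrict_Icc : mu01 = volume.restrict (Icc 0 1) :=
  Measure.restrict_congr_set Ioc_ae_eq_Icc

section L2

variable {τ : ℝ → ℂ}

theorem aestronglyMeasurable_tauN (hτ : AEStronglyMeasurable τ mu01) :
    ∀ m, AEStronglyMeasurable (tauN τ m) mu01
  | 0 => hτ
  | n + 1 => by
    rw [mu01_eq_restrict_Icc] at hτ ⊢
    rw [tauN_succ_congr hτ.ae_eq_mk n]
    exact (stronglyMeasurable_tauN_succ hτ.stronglyMeasurable_mk.measurable n).aestronglyMeasurable

theorem eLpNorm_tauN_sq_le (hτ : AEStronglyMeasurable τ mu01) :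
    ∀ m : ℕ, eLpNorm (tauN τ m) 2 mu01 ^ 2 ≤
      eLpNorm τ 2 mu01 ^ (2 * (m + 1)) / (m ! * (m + 1)! : ℝ≥0∞)
  | 0 => by simp [tauN]
  | n + 1 => by
    rw [mu01_eq_restrict_Icc] at hτ ⊢
    set τ' := hτ.mk τ
    rw [tauN_succ_congr hτ.ae_eq_mk n, eLpNorm_congr_ae hτ.ae_eq_mk, pow_mul, eLpNorm_two_sq,
      eLpNorm_two_sq, ENNReal.div_eq_inv_mul, ENNReal.mul_inv (by simp) (by simp)]
    calc ∫⁻ s in Icc 0 1, ‖tauN τ' (n + 1) s‖ₑ ^ 2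
        ≤ ∫⁻ s, ‖tauN τ' (n + 1) s‖ₑ ^ 2 := setLIntegral_le_lintegral _ _
      _ ≤ _ := lintegral_enorm_tauN_succ_sq_le hτ.stronglyMeasurable_mk.measurable n

theorem memLp_tauN (hτ : MemLp τ 2 mu01) (m : ℕ) : MemLp (tauN τ m) 2 mu01 := by
  refine ⟨aestronglyMeasurable_tauN hτ.1 m, ?_⟩
  have hfin : eLpNorm τ 2 mu01 ^ (2 * (m + 1)) / (m ! * (m + 1)! : ℝ≥0∞) < ⊤ :=
    ENNReal.div_lt_top (ENNReal.pow_ne_top hτ.2.ne) (by simp [Nat.factorial_ne_zero])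
  simpa [ENNReal.pow_lt_top_iff] using (eLpNorm_tauN_sq_le hτ.1 m).trans_lt hfin

theorem L2norm_tauN_sq_le (hτ : MemLp τ 2 mu01) (m : ℕ) :
    L2norm (tauN τ m) ^ 2 ≤ L2norm τ ^ (2 * (m + 1)) / (m ! * (m + 1)!) := by
  have hfin : eLpNorm τ 2 mu01 ^ (2 * (m + 1)) / (m ! * (m + 1)! : ℝ≥0∞) ≠ ⊤ :=
    ENNReal.div_ne_top (ENNReal.pow_ne_top hτ.2.ne) (by simp [Nat.factorial_ne_zero])
  simpa [L2norm, ENNReal.toReal_pow, ENNReal.toReal_div] using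
    ENNReal.toReal_mono hfin (eLpNorm_tauN_sq_le hτ.1 m)

theorem L2norm_tauN_le (hτ : MemLp τ 2 mu01) (m : ℕ) :
    L2norm (tauN τ m) ≤ L2norm τ * (L2norm τ ^ m / m !) := by
  have hC : 0 ≤ L2norm τ := ENNReal.toReal_nonneg
  refine (pow_le_pow_iff_left₀ ENNReal.toReal_nonneg (by positivity) two_ne_zero).1 ?_
  refine (L2norm_tauN_sq_le hτ m).trans ?_
  rw [mul_div_assoc', div_pow, ← pow_succ', ← pow_mul, mul_comm 2, sq]
  gcongr
  exact m.le_succ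

end L2

/-- For `τ ∈ L²(0,1)` one has
`‖τ_n‖₂² ≤ ‖τ‖₂^{2n} / ((n−1)!·n!)` (here `τ_n = tauN τ (n-1)`), and consequently
both series `Σ_{n≥1} (±1)ⁿ τ_n` converge in `L²(0,1)`. -/
theorem tauN_bound_and_convergence (τ : ℝ → ℂ) (hτ : MemLp τ 2 mu01) :
    (∀ m : ℕ, L2norm (tauN τ m) ^ 2 ≤
        L2norm τ ^ (2*(m+1)) / (Nat.factorial m * Nat.factorial (m+1))) ∧
      (∃ gp : ℝ → ℂ, MemLp gp 2 mu01 ∧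
        Filter.Tendsto
          (fun N => eLpNorm
            (fun x => (∑ k ∈ Finset.range N, tauN τ k x) - gp x) 2 mu01)
          Filter.atTop (nhds 0)) ∧
      (∃ gm : ℝ → ℂ, MemLp gm 2 mu01 ∧
        Filter.Tendsto
          (fun N => eLpNorm
            (fun x => (∑ k ∈ Finset.range N, (-1:ℂ)^(k+1) * tauN τ k x) - gm x)
            2 mu01)
          Filter.atTop (nhds 0)) := by
  have hsum : Summable fun k => L2norm (tauN τ k) :=
    ((Real.summable_pow_div_factorial _).mul_left _).of_nonneg_of_le
      (fun _ => ENNReal.toReal_nonneg) (L2norm_tauN_le hτ)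
  refine ⟨L2norm_tauN_sq_le hτ, exists_memLp_tendsto_eLpNorm_sum_sub (memLp_tauN hτ) hsum,
    exists_memLp_tendsto_eLpNorm_sum_sub (fun k => (memLp_tauN hτ k).const_mul _) ?_⟩
  simpa [L2norm, ← smul_eq_mul, ← Pi.smul_def, eLpNorm_const_smul] using hsum
end
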